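/- arXiv:1509.05608 — 2 statements merged into one kernel-verified Lean document; each statement's English description precedes it below -/
import Mathlib

section
/- Let P = Σ_{|α| ≤ d} c_α D^α be a constant-coefficient partial differential operator on ℝⁿ, where D^α = (-i)^{|α|} ∂^α and c_α ∈ ℂ, with symbol p(ξ) = Σ_{|α| ≤ d} c_α ξ^α. Assume there is R > 0 with p(ξ) ≠ 0 for all |ξ| ≥ R, and assume there exist C > 0 and N ∈ ℕ with |1/p(ξ)| ≤ C (1+|ξ|)^N for |ξ| ≥ R. Let χ : ℝⁿ → ℝ be a smooth function with χ(ξ) = 0 for |ξ| ≤ R and χ(ξ) = 1 for |ξ| ≥ R + 1. For a Schwartz function f define (Qf)(x) = (2π)^{-n/2} ∫_{ℝⁿ} e^{i ξ·x} (χ(ξ)/p(ξ)) f̂(ξ) dξ, where f̂(ξ) = (2π)^{-n/2} ∫ e^{-i ξ·y} f(y) dy. Then Qf is smooth, and P(Qf)(x) = f(x) + ∫_{ℝⁿ} r(x-y) f(y) dy for all x, where r(z) = (2π)^{-n} ∫_{ℝⁿ} e^{i ξ·z} (χ(ξ) - 1) dξ is a smooth function (the Fourier inverse of the compactly supported smooth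 function χ - 1). -/
open MeasureTheory

/-- The partial derivative `∂/∂x_i` of a function on `ℝⁿ`. -/
noncomputable def pd {n : ℕ} {F : Type*} [NormedAddCommGroup F] [NormedSpace ℝ F]
    (i : Fin n) (f : EuclideanSpace ℝ (Fin n) → F) : EuclideanSpace ℝ (Fin n) → F :=
  fun x => fderiv ℝ f x (EuclideanSpace.single i 1)

/-- The iterated partial derivative `∂^α = (∂/∂x_1)^{α_1} ⋯ (∂/∂x_n)^{α_n}`
associated with a multi-index `α`. -/
noncomputable def mderiv {n : ℕ} {F : Type*} [NormedAddCommGroup F] [NormedSpace ℝ F]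
    (α : Fin n → ℕ) (f : EuclideanSpace ℝ (Fin n) → F) : EuclideanSpace ℝ (Fin n) → F :=
  ((List.finRange n).foldr (fun i g => (pd i)^[α i] ∘ g) id) f

/-- The finite set of multi-indices `α` with `|α| = Σ α_i ≤ d`. -/
def mIdx (n d : ℕ) : Finset (Fin n → ℕ) :=
  (Fintype.piFinset fun _ : Fin n => Finset.range (d + 1)).filter fun α => ∑ i, α i ≤ d

/-- The differential operator `Σ_{|α| ≤ d} a_α(x) D^α`, where `D^α = (-i)^{|α|} ∂^α`. -/
noncomputable def diffOp (n d : ℕ)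
    (a : (Fin n → ℕ) → EuclideanSpace ℝ (Fin n) → ℂ)
    (f : EuclideanSpace ℝ (Fin n) → ℂ) : EuclideanSpace ℝ (Fin n) → ℂ :=
  fun x => ∑ α ∈ mIdx n d, a α x * ((-Complex.I) ^ (∑ i, α i) * mderiv α f x)

/-- The symbol `σ(x,ξ) = Σ_{|α| ≤ d} a_α(x) ξ^α` of the operator `diffOp n d a`. -/
noncomputable def symb (n d : ℕ)
    (a : (Fin n → ℕ) → EuclideanSpace ℝ (Fin n) → ℂ)
    (x ξ : EuclideanSpace ℝ (Fin n)) : ℂ :=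
  ∑ α ∈ mIdx n d, a α x * ∏ i, ((ξ i : ℝ) : ℂ) ^ α i

/-! Write every transform through the unnormalized integral `F g x = ∫ e^{i⟪ξ, x⟫} g(ξ) dξ`, so
that `f̂ ξ = (2π)^{-n/2} F f (-ξ)`. If `g` decays rapidly, `F g` is smooth and
`∂ⱼ (F g) = F (i ξⱼ g)`, hence `P (F g) = F (p g)`. The spectrum `(2π)^{-n/2} (χ/p) f̂` of `Qf`
decays rapidly since `f̂` is Schwartz and `1/p` grows at most polynomially on the support of `χ`.
Therefore `P (Qf) = (2π)^{-n} F (χ F f (-·)) = (2π)^{-n} F ((1 + (χ - 1)) F f (-·))`, where the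
term `1` gives `f` by Fourier inversion and the term `χ - 1` gives `r * f` by Fubini. -/

open scoped FourierTransform RealInnerProductSpace SchwartzMap
open Real

section InvFourierIntegral

variable {E : Type*} [NormedAddCommGroup E] [InnerProductSpace ℝ E] [FiniteDimensional ℝ E]
  [MeasurableSpace E] [BorelSpace E]

noncomputable def invFourierInt (g : E → ℂ) (x : E) : ℂ :=
  ∫ ξ, Complex.exp (Complex.I * ⟪ξ, x⟫) * g ξ

lemma invFourierInt_eq_fourier (g : E → ℂ) (x : E) :
    invFourierInt g x = 𝓕 g (-(2 * π)⁻¹ • x) := by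
  rw [invFourierInt, Real.fourier_eq']
  congr 1 with ξ
  rw [real_inner_smul_right, smul_eq_mul, mul_comm Complex.I]
  congr 3
  field_simp

lemma invFourierInt_neg_eq_fourier (g : E → ℂ) (ξ : E) :
    invFourierInt g (-ξ) = 𝓕 g ((2 * π)⁻¹ • ξ) := by
  rw [invFourierInt_eq_fourier, smul_neg, neg_smul, neg_neg]

lemma integrable_exp_mul_invFourierInt {g : E → ℂ} (hg : Integrable g) (x : E) :
    Integrable fun ξ => Complex.exp (Complex.I * ⟪ξ, x⟫) * g ξ := by
  refine hg.norm.mono' ?_ (.of_forall fun ξ => ?_)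
  · exact (by fun_prop : Continuous fun ξ : E => Complex.exp (Complex.I * ⟪ξ, x⟫))
      |>.aestronglyMeasurable.mul hg.1
  · rw [norm_mul, mul_comm Complex.I, Complex.norm_exp_ofReal_mul_I, one_mul]

lemma invFourierInt_const_mul (a : ℂ) (g : E → ℂ) (x : E) :
    invFourierInt (fun ξ => a * g ξ) x = a * invFourierInt g x := by
  rw [invFourierInt, invFourierInt, ← integral_const_mul]
  congr 1 with ξ
  ring

lemma invFourierInt_add {g₁ g₂ : E → ℂ} (h₁ : Integrable g₁) (h₂ : Integrable g₂) (x : E) :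
    invFourierInt (fun ξ => g₁ ξ + g₂ ξ) x = invFourierInt g₁ x + invFourierInt g₂ x := by
  rw [invFourierInt, invFourierInt, invFourierInt, ← integral_add
    (integrable_exp_mul_invFourierInt h₁ x) (integrable_exp_mul_invFourierInt h₂ x)]
  congr 1 with ξ
  ring

lemma invFourierInt_finsetSum {ι : Type*} (s : Finset ι) {g : ι → E → ℂ}
    (hg : ∀ i ∈ s, Integrable (g i)) (x : E) :
    invFourierInt (fun ξ => ∑ i ∈ s, g i ξ) x = ∑ i ∈ s, invFourierInt (g i) x := by
  simp only [invFourierInt, Finset.mul_sum]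
  exact integral_finsetSum s fun i hi => integrable_exp_mul_invFourierInt (hg i hi) x

lemma invFourierInt_invFourierInt_neg {f : E → ℂ} (hf : Integrable f) (hf' : Integrable (𝓕 f))
    {x : E} (hfx : ContinuousAt f x) :
    invFourierInt (fun ξ => invFourierInt f (-ξ)) x = (2 * π) ^ Module.finrank ℝ E * f x := by
  have hscale := Measure.integral_comp_inv_smul_of_nonneg volume
    (fun w : E => Complex.exp (↑(2 * π * ⟪w, x⟫) * Complex.I) • 𝓕 f w) (R := 2 * π)
    (by positivity)
  rw [← Real.fourierInv_eq', hf.fourierInv_fourier_eq hf' hfx, Complex.real_smul] at hscale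
  push_cast at hscale
  rw [invFourierInt, ← hscale]
  congr 1 with ξ
  rw [invFourierInt_neg_eq_fourier, real_inner_smul_left, smul_eq_mul]
  congr 2
  push_cast
  field_simp

lemma invFourierInt_mul_invFourierInt_neg {q f : E → ℂ} (hq : Integrable q) (hf : Integrable f)
    (x : E) :
    invFourierInt (fun ξ => q ξ * invFourierInt f (-ξ)) x =
      ∫ y, invFourierInt q (x - y) * f y := by
  have hexp : ∀ ξ y, Complex.exp (Complex.I * ⟪ξ, x⟫) * Complex.exp (Complex.I * ⟪y, -ξ⟫) =
      Complex.exp (Complex.I * ⟪ξ, x - y⟫) := fun ξ y => by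
    rw [← Complex.exp_add, inner_sub_right, inner_neg_right, real_inner_comm ξ y]
    push_cast
    ring_nf
  have hH : Integrable (Function.uncurry fun ξ y =>
      Complex.exp (Complex.I * ⟪ξ, x - y⟫) * q ξ * f y) (volume.prod volume) := by
    refine (hq.norm.mul_prod hf.norm).mono' ?_ (.of_forall fun z => ?_)
    · exact ((by fun_prop : Continuous fun z : E × E =>
        Complex.exp (Complex.I * ⟪z.1, x - z.2⟫)).aestronglyMeasurable.mul hq.1.comp_fst).mul
          hf.1.comp_snd
    · rw [Function.uncurry_apply_pair, norm_mul, norm_mul, mul_comm Complex.I,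
        Complex.norm_exp_ofReal_mul_I, one_mul]
  calc invFourierInt (fun ξ => q ξ * invFourierInt f (-ξ)) x
      = ∫ ξ, ∫ y, Complex.exp (Complex.I * ⟪ξ, x - y⟫) * q ξ * f y := by
        simp only [invFourierInt, ← integral_const_mul]
        congr 1 with ξ
        congr 1 with y
        rw [← hexp ξ y]
        ring
    _ = ∫ y, ∫ ξ, Complex.exp (Complex.I * ⟪ξ, x - y⟫) * q ξ * f y := integral_integral_swap hH
    _ = ∫ y, invFourierInt q (x - y) * f y := by
        simp only [invFourierInt, ← integral_mul_const]

def RapidDecay (g : E → ℂ) : Prop :=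
  AEStronglyMeasurable g ∧ ∀ M : ℕ, ∃ B, ∀ ξ, (1 + ‖ξ‖) ^ M * ‖g ξ‖ ≤ B

namespace RapidDecay

variable {g : E → ℂ}

lemma exists_bound (hg : RapidDecay g) : ∃ B, ∀ ξ, ‖g ξ‖ ≤ B := by
  simpa using hg.2 0

lemma integrable_pow_mul (hg : RapidDecay g) (k : ℕ) :
    Integrable fun ξ => ‖ξ‖ ^ k * ‖g ξ‖ := by
  set m := Module.finrank ℝ E + 1
  obtain ⟨B, hB⟩ := hg.2 (k + m)
  have hint : Integrable fun ξ : E => B * (1 + ‖ξ‖) ^ (-(m : ℝ)) :=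
    (integrable_one_add_norm (by simp [m])).const_mul B
  refine hint.mono' ((continuous_norm.pow k).aestronglyMeasurable.mul hg.1.norm)
    (.of_forall fun ξ => ?_)
  have hpos : 0 < (1 + ‖ξ‖) ^ m := by positivity
  rw [Real.norm_of_nonneg (by positivity), Real.rpow_neg (by positivity), Real.rpow_natCast,
    ← div_eq_mul_inv, le_div_iff₀ hpos]
  calc ‖ξ‖ ^ k * ‖g ξ‖ * (1 + ‖ξ‖) ^ m ≤ (1 + ‖ξ‖) ^ k * ‖g ξ‖ * (1 + ‖ξ‖) ^ m := by
        gcongr; linarith [norm_nonneg ξ]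
    _ = (1 + ‖ξ‖) ^ (k + m) * ‖g ξ‖ := by ring
    _ ≤ B := hB ξ

lemma integrable (hg : RapidDecay g) : Integrable g :=
  (hg.integrable_pow_mul 0).mono' hg.1 (.of_forall fun ξ => by simp)

lemma integrable_norm_mul (hg : RapidDecay g) : Integrable fun ξ => ‖ξ‖ * ‖g ξ‖ := by
  simpa using hg.integrable_pow_mul 1

lemma mul_of_norm_le (hg : RapidDecay g) {q : E → ℂ} (hq : AEStronglyMeasurable q)
    {A : ℝ} {N : ℕ} (hA : ∀ ξ, ‖q ξ‖ ≤ A * (1 + ‖ξ‖) ^ N) :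
    RapidDecay fun ξ => q ξ * g ξ := by
  refine ⟨hq.mul hg.1, fun M => ?_⟩
  obtain ⟨B, hB⟩ := hg.2 (M + N)
  have hA₀ : 0 ≤ A := nonneg_of_mul_nonneg_left ((norm_nonneg _).trans (hA 0)) (by positivity)
  refine ⟨A * B, fun ξ => ?_⟩
  calc (1 + ‖ξ‖) ^ M * ‖q ξ * g ξ‖ ≤ (1 + ‖ξ‖) ^ M * (A * (1 + ‖ξ‖) ^ N * ‖g ξ‖) := by
        rw [norm_mul]; gcongr; exact hA ξ
    _ = A * ((1 + ‖ξ‖) ^ (M + N) * ‖g ξ‖) := by ring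
    _ ≤ A * B := by gcongr; exact hB ξ

lemma const_mul (hg : RapidDecay g) (a : ℂ) : RapidDecay fun ξ => a * g ξ :=
  hg.mul_of_norm_le aestronglyMeasurable_const (A := ‖a‖) (N := 0) fun _ => by simp

lemma inner_mul (hg : RapidDecay g) (v : E) :
    RapidDecay fun ξ => Complex.I * ⟪ξ, v⟫ * g ξ := by
  refine hg.mul_of_norm_le (by fun_prop) (A := ‖v‖) (N := 1) fun ξ => ?_
  rw [norm_mul, Complex.norm_I, one_mul, Complex.norm_real, pow_one]
  calc ‖⟪ξ, v⟫‖ ≤ ‖ξ‖ * ‖v‖ := norm_inner_le_norm ξ v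
    _ ≤ ‖v‖ * (1 + ‖ξ‖) := by nlinarith [norm_nonneg ξ, norm_nonneg v]

lemma contDiff_invFourierInt (hg : RapidDecay g) {N : ℕ∞} :
    ContDiff ℝ N (invFourierInt g) := by
  have h : ContDiff ℝ N (𝓕 g) := Real.contDiff_fourier fun k _ => hg.integrable_pow_mul k
  have hF : invFourierInt g = 𝓕 g ∘ fun x => -(2 * π)⁻¹ • x :=
    funext (invFourierInt_eq_fourier g)
  exact hF ▸ h.comp (contDiff_id.const_smul _)

lemma fderiv_invFourierInt (hg : RapidDecay g) (x v : E) :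
    fderiv ℝ (invFourierInt g) x v = invFourierInt (fun ξ => Complex.I * ⟪ξ, v⟫ * g ξ) x := by
  set S : E →L[ℝ] E := (-(2 * π)⁻¹ : ℝ) • ContinuousLinearMap.id ℝ E
  have hS : ∀ y, S y = -(2 * π)⁻¹ • y := fun y => rfl
  have hF : invFourierInt g = 𝓕 g ∘ S := funext (invFourierInt_eq_fourier g)
  have hder := (Real.hasFDerivAt_fourier hg.integrable hg.integrable_norm_mul (S x)).comp x
    S.hasFDerivAt
  have hint : Integrable fun ξ => VectorFourier.fourierSMulRight (innerSL ℝ) g ξ := by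
    refine ((hg.integrable_norm_mul).const_mul (2 * π * ‖innerSL ℝ (E := E)‖)).mono'
      hg.1.fourierSMulRight (.of_forall fun ξ => ?_)
    grw [VectorFourier.norm_fourierSMulRight_le]
    exact (mul_assoc _ _ _).le
  have hmul : (fun ξ => VectorFourier.fourierSMulRight (innerSL ℝ) g ξ (S v)) =
      fun ξ => Complex.I * ⟪ξ, v⟫ * g ξ := by
    funext ξ
    rw [VectorFourier.fourierSMulRight_apply, innerSL_apply_apply, hS, inner_smul_right]
    simp only [smul_eq_mul, Complex.real_smul]
    push_cast
    field_simp
  rw [← hF] at hder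
  rw [hder.fderiv, ContinuousLinearMap.comp_apply, Real.fourier_continuousLinearMap_apply hint,
    hmul, invFourierInt_eq_fourier, hS]

end RapidDecay

lemma rapidDecay_ofReal_sub_one {χ : E → ℝ} {R : ℝ} (hχ : Continuous χ)
    (hχ1 : ∀ ξ, R ≤ ‖ξ‖ → χ ξ = 1) : RapidDecay fun ξ => (χ ξ : ℂ) - 1 := by
  have hs : HasCompactSupport fun ξ => (χ ξ : ℂ) - 1 := by
    refine .intro (isCompact_closedBall 0 R) fun ξ hξ => ?_
    rw [Metric.mem_closedBall, dist_zero_right, not_le] at hξ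
    simp [hχ1 ξ hξ.le]
  refine ⟨(by fun_prop : Continuous fun ξ => (χ ξ : ℂ) - 1).aestronglyMeasurable, fun M => ?_⟩
  obtain ⟨B, hB⟩ := Continuous.bounded_above_of_compact_support
    (f := fun ξ => (1 + ‖ξ‖) ^ M * ‖(χ ξ : ℂ) - 1‖) (by fun_prop) hs.norm.mul_left
  exact ⟨B, fun ξ => (le_abs_self _).trans (hB ξ)⟩

lemma SchwartzMap.rapidDecay (f : 𝓢(E, ℂ)) : RapidDecay f := by
  refine ⟨f.continuous.aestronglyMeasurable, fun M => ?_⟩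
  exact ⟨_, fun ξ => by
    simpa using f.one_add_le_sup_seminorm_apply (𝕜 := ℝ) (m := (M, 0)) le_rfl le_rfl ξ⟩

lemma SchwartzMap.rapidDecay_invFourierInt_neg (f : 𝓢(E, ℂ)) :
    RapidDecay fun ξ => invFourierInt f (-ξ) := by
  have hπ : (2 * π)⁻¹ ≠ 0 := by positivity
  have := (compCLMOfContinuousLinearEquiv ℂ
    (ContinuousLinearEquiv.smulLeft (R₁ := ℝ) (Units.mk0 _ hπ)) (𝓕 f)).rapidDecay
  simp_rw [invFourierInt_neg_eq_fourier]
  exact this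

lemma SchwartzMap.invFourierInt_one_add_mul_invFourierInt_neg (f : 𝓢(E, ℂ)) {q : E → ℂ}
    (hq : RapidDecay q) (x : E) :
    invFourierInt (fun ξ => (1 + q ξ) * invFourierInt f (-ξ)) x =
      (2 * π) ^ Module.finrank ℝ E * f x + ∫ y, invFourierInt q (x - y) * f y := by
  have hf := f.rapidDecay_invFourierInt_neg
  obtain ⟨B, hB⟩ := hq.exists_bound
  simp only [add_mul, one_mul]
  rw [invFourierInt_add hf.integrable
      (hf.mul_of_norm_le hq.1 (A := B) (N := 0) (by simpa using hB)).integrable,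
    invFourierInt_invFourierInt_neg f.integrable (fourierTransformCLM ℂ f).integrable
      f.continuous.continuousAt,
    invFourierInt_mul_invFourierInt_neg hq.integrable f.integrable]

-- Rapid decay of `m * g` is part of the definition so that multipliers compose.
def IsFourierMultiplier (T : (E → ℂ) → E → ℂ) (m : E → ℂ) : Prop :=
  ∀ g, RapidDecay g → RapidDecay (fun ξ => m ξ * g ξ) ∧
    T (invFourierInt g) = invFourierInt fun ξ => m ξ * g ξ

lemma isFourierMultiplier_id : IsFourierMultiplier (id : (E → ℂ) → E → ℂ) fun _ => 1 :=
  fun g hg => by simpa using hg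

namespace IsFourierMultiplier

lemma comp {T S : (E → ℂ) → E → ℂ} {m m' : E → ℂ} (hT : IsFourierMultiplier T m)
    (hS : IsFourierMultiplier S m') : IsFourierMultiplier (T ∘ S) fun ξ => m ξ * m' ξ := by
  intro g hg
  obtain ⟨hg', hSg⟩ := hS g hg
  obtain ⟨hg'', hTg⟩ := hT _ hg'
  simp only [mul_assoc]
  exact ⟨hg'', by rw [Function.comp_apply, hSg, hTg]⟩

lemma iterate {T : (E → ℂ) → E → ℂ} {m : E → ℂ} (hT : IsFourierMultiplier T m) (k : ℕ) :
    IsFourierMultiplier T^[k] fun ξ => m ξ ^ k := by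
  induction k with
  | zero => simpa using isFourierMultiplier_id
  | succ k ih => simpa only [Function.iterate_succ', pow_succ'] using hT.comp ih

end IsFourierMultiplier

end InvFourierIntegral

section Euclidean

variable {n : ℕ}

lemma EuclideanSpace.sum_mul_eq_inner (ξ x : EuclideanSpace ℝ (Fin n)) :
    ∑ i, ξ i * x i = ⟪ξ, x⟫ := by
  simp [PiLp.inner_apply, mul_comm]

lemma invFourierInt_eq_integral_sum (g : EuclideanSpace ℝ (Fin n) → ℂ)
    (x : EuclideanSpace ℝ (Fin n)) :
    invFourierInt g x = ∫ ξ, Complex.exp (Complex.I * ((∑ i, ξ i * x i : ℝ) : ℂ)) * g ξ := by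
  simp only [invFourierInt, EuclideanSpace.sum_mul_eq_inner]

lemma invFourierInt_neg_eq_integral_sum (g : EuclideanSpace ℝ (Fin n) → ℂ)
    (ξ : EuclideanSpace ℝ (Fin n)) :
    invFourierInt g (-ξ) =
      ∫ y, Complex.exp (-(Complex.I * ((∑ i, ξ i * y i : ℝ) : ℂ))) * g y := by
  simp only [invFourierInt, EuclideanSpace.sum_mul_eq_inner, inner_neg_right,
    real_inner_comm ξ, Complex.ofReal_neg, mul_neg]

lemma isFourierMultiplier_pd (i : Fin n) :
    IsFourierMultiplier (pd i) fun ξ => Complex.I * ξ i := by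
  refine fun g hg => ⟨?_, funext fun x => ?_⟩
  · simpa [EuclideanSpace.inner_single_right] using hg.inner_mul (EuclideanSpace.single i 1)
  · simp [pd, hg.fderiv_invFourierInt, EuclideanSpace.inner_single_right]

lemma isFourierMultiplier_mderiv (α : Fin n → ℕ) :
    IsFourierMultiplier (mderiv α) fun ξ => Complex.I ^ (∑ i, α i) * ∏ i, (ξ i : ℂ) ^ α i := by
  have hfoldr : ∀ l : List (Fin n), IsFourierMultiplier (l.foldr (fun i g => (pd i)^[α i] ∘ g) id)
      fun ξ => (l.map fun i => (Complex.I * ξ i) ^ α i).prod := by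
    intro l
    induction l with
    | nil => simpa using isFourierMultiplier_id
    | cons i l ih => simpa using ((isFourierMultiplier_pd i).iterate (α i)).comp ih
  convert hfoldr (List.finRange n) using 2 with ξ
  · rfl
  rw [← Fin.prod_univ_def, Finset.prod_congr rfl fun i _ => mul_pow _ _ _,
    Finset.prod_mul_distrib, Finset.prod_pow_eq_pow_sum]

lemma RapidDecay.diffOp_invFourierInt {g : EuclideanSpace ℝ (Fin n) → ℂ} (hg : RapidDecay g)
    (d : ℕ) (c : (Fin n → ℕ) → ℂ) (x : EuclideanSpace ℝ (Fin n)) :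
    diffOp n d (fun α _ => c α) (invFourierInt g) x =
      invFourierInt (fun ξ => (∑ α ∈ mIdx n d, c α * ∏ i, (ξ i : ℂ) ^ α i) * g ξ) x := by
  set h : (Fin n → ℕ) → EuclideanSpace ℝ (Fin n) → ℂ := fun α ξ =>
    c α * (-Complex.I) ^ (∑ i, α i) * ((Complex.I ^ (∑ i, α i) * ∏ i, (ξ i : ℂ) ^ α i) * g ξ)
  have hterm : ∀ α, c α * ((-Complex.I) ^ (∑ i, α i) * mderiv α (invFourierInt g) x) =
      invFourierInt (h α) x := fun α => by
    rw [(isFourierMultiplier_mderiv α g hg).2, ← mul_assoc, ← invFourierInt_const_mul]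
  have hint : ∀ α ∈ mIdx n d, Integrable (h α) := fun α _ =>
    ((isFourierMultiplier_mderiv α g hg).1.const_mul _).integrable
  rw [diffOp, Finset.sum_congr rfl fun α _ => hterm α, ← invFourierInt_finsetSum _ hint]
  congr 1
  funext ξ
  rw [Finset.sum_mul]
  refine Finset.sum_congr rfl fun α _ => ?_
  have hI : (-Complex.I) ^ (∑ i, α i) * Complex.I ^ (∑ i, α i) = 1 := by
    rw [← mul_pow, neg_mul, Complex.I_mul_I, neg_neg, one_pow]
  linear_combination (c α * (∏ i, (ξ i : ℂ) ^ α i) * g ξ) * hI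

end Euclidean

lemma norm_ofReal_div_le {E : Type*} [NormedAddCommGroup E] {χ : E → ℝ} {p : E → ℂ}
    {R C M : ℝ} {N : ℕ} (hC : 0 ≤ C) (hM : ∀ ξ, ‖(χ ξ : ℂ)‖ ≤ M)
    (hχ0 : ∀ ξ, ‖ξ‖ ≤ R → χ ξ = 0) (hbound : ∀ ξ, R ≤ ‖ξ‖ → ‖(p ξ)⁻¹‖ ≤ C * (1 + ‖ξ‖) ^ N)
    (ξ : E) : ‖(χ ξ : ℂ) / p ξ‖ ≤ M * C * (1 + ‖ξ‖) ^ N := by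
  rcases le_or_gt R ‖ξ‖ with h | h
  · rw [div_eq_mul_inv, norm_mul, mul_assoc]
    exact mul_le_mul (hM ξ) (hbound ξ h) (norm_nonneg _) ((norm_nonneg _).trans (hM ξ))
  · have hM₀ : 0 ≤ M := (norm_nonneg _).trans (hM ξ)
    rw [hχ0 ξ h.le, Complex.ofReal_zero, zero_div, norm_zero]
    positivity

lemma RapidDecay.ofReal_div_mul {E : Type*} [NormedAddCommGroup E] [InnerProductSpace ℝ E]
    [FiniteDimensional ℝ E] [MeasurableSpace E] [BorelSpace E] {χ : E → ℝ} {p h : E → ℂ}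
    {R R₁ C : ℝ} {N : ℕ} (hh : RapidDecay h) (hχ : Continuous χ) (hp : Continuous p)
    (hC : 0 ≤ C) (hχ0 : ∀ ξ, ‖ξ‖ ≤ R → χ ξ = 0) (hχ1 : ∀ ξ, R₁ ≤ ‖ξ‖ → χ ξ = 1)
    (hbound : ∀ ξ, R ≤ ‖ξ‖ → ‖(p ξ)⁻¹‖ ≤ C * (1 + ‖ξ‖) ^ N) :
    RapidDecay fun ξ => (χ ξ : ℂ) / p ξ * h ξ := by
  obtain ⟨M, hM⟩ := (rapidDecay_ofReal_sub_one hχ hχ1).exists_bound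
  have hχM : ∀ ξ, ‖(χ ξ : ℂ)‖ ≤ 1 + M := fun ξ =>
    (norm_le_insert' _ 1).trans (by simpa using hM ξ)
  exact hh.mul_of_norm_le ((Complex.continuous_ofReal.comp hχ).measurable.div
    hp.measurable).aestronglyMeasurable (norm_ofReal_div_le hC hχM hχ0 hbound)

lemma ofReal_two_pi_rpow_neg_mul_pow (n : ℕ) :
    (((2 * π) ^ (-(n : ℝ)) : ℝ) : ℂ) * (2 * π) ^ n = 1 := by
  have h : ((2 * π) ^ (-(n : ℝ)) : ℝ) * (2 * π) ^ n = 1 := by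
    rw [Real.rpow_neg (by positivity), Real.rpow_natCast, inv_mul_cancel₀ (by positivity)]
  exact_mod_cast h

theorem stmt3_general (n d : ℕ) (c : (Fin n → ℕ) → ℂ) (R : ℝ)
    (p : EuclideanSpace ℝ (Fin n) → ℂ)
    (hp : ∀ ξ, p ξ = ∑ α ∈ mIdx n d, c α * ∏ i, ((ξ i : ℝ) : ℂ) ^ α i)
    (hpz : ∀ ξ, R ≤ ‖ξ‖ → p ξ ≠ 0)
    (C : ℝ) (hC : 0 < C) (N : ℕ)
    (hbound : ∀ ξ, R ≤ ‖ξ‖ → ‖(p ξ)⁻¹‖ ≤ C * (1 + ‖ξ‖) ^ N)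
    (χ : EuclideanSpace ℝ (Fin n) → ℝ) (hχ : ContDiff ℝ (⊤ : ℕ∞) χ)
    (hχ0 : ∀ ξ, ‖ξ‖ ≤ R → χ ξ = 0) (hχ1 : ∀ ξ, R + 1 ≤ ‖ξ‖ → χ ξ = 1)
    (f : SchwartzMap (EuclideanSpace ℝ (Fin n)) ℂ)
    (fhat : EuclideanSpace ℝ (Fin n) → ℂ)
    (hfhat : ∀ ξ, fhat ξ = (((2 * Real.pi) ^ (-(n : ℝ) / 2) : ℝ) : ℂ) *
      ∫ y : EuclideanSpace ℝ (Fin n),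
        Complex.exp (-(Complex.I * ((∑ i, ξ i * y i : ℝ) : ℂ))) * f y)
    (Qf : EuclideanSpace ℝ (Fin n) → ℂ)
    (hQf : ∀ x, Qf x = (((2 * Real.pi) ^ (-(n : ℝ) / 2) : ℝ) : ℂ) *
      ∫ ξ : EuclideanSpace ℝ (Fin n),
        Complex.exp (Complex.I * ((∑ i, ξ i * x i : ℝ) : ℂ)) * (((χ ξ : ℂ) / p ξ) * fhat ξ))
    (r : EuclideanSpace ℝ (Fin n) → ℂ)
    (hr : ∀ z, r z = (((2 * Real.pi) ^ (-(n : ℝ)) : ℝ) : ℂ) *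
      ∫ ξ : EuclideanSpace ℝ (Fin n),
        Complex.exp (Complex.I * ((∑ i, ξ i * z i : ℝ) : ℂ)) * ((χ ξ : ℂ) - 1)) :
    ContDiff ℝ (⊤ : ℕ∞) Qf ∧ ContDiff ℝ (⊤ : ℕ∞) r ∧
    ∀ x, diffOp n d (fun α _ => c α) Qf x
      = f x + ∫ y : EuclideanSpace ℝ (Fin n), r (x - y) * f y := by
  set c₀ : ℂ := (((2 * Real.pi) ^ (-(n : ℝ) / 2) : ℝ) : ℂ)
  have hc₀ : c₀ * c₀ = (((2 * Real.pi) ^ (-(n : ℝ)) : ℝ) : ℂ) := by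
    rw [← Complex.ofReal_mul, ← Real.rpow_add (by positivity)]
    ring_nf
  obtain rfl : fhat = fun ξ => c₀ * invFourierInt f (-ξ) :=
    funext fun ξ => by rw [hfhat, invFourierInt_neg_eq_integral_sum]
  obtain rfl : Qf = invFourierInt fun ξ => c₀ * ((χ ξ : ℂ) / p ξ * (c₀ * invFourierInt f (-ξ))) :=
    funext fun x => by rw [hQf, invFourierInt_const_mul, invFourierInt_eq_integral_sum]
  obtain rfl : r = fun z => c₀ * c₀ * invFourierInt (fun ξ => (χ ξ : ℂ) - 1) z :=
    funext fun z => by rw [hr, hc₀, invFourierInt_eq_integral_sum]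
  have hχd := rapidDecay_ofReal_sub_one hχ.continuous hχ1
  have hpc : Continuous p := funext hp ▸ by fun_prop
  have hg := ((f.rapidDecay_invFourierInt_neg.const_mul c₀).ofReal_div_mul hχ.continuous hpc
    hC.le hχ0 hχ1 hbound).const_mul c₀
  refine ⟨hg.contDiff_invFourierInt, contDiff_const.mul hχd.contDiff_invFourierInt, fun x => ?_⟩
  have hsymb : ∀ ξ, p ξ * (c₀ * ((χ ξ : ℂ) / p ξ * (c₀ * invFourierInt f (-ξ)))) =
      c₀ * c₀ * ((1 + ((χ ξ : ℂ) - 1)) * invFourierInt f (-ξ)) := fun ξ => by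
    -- `χ / p` is `0` where `p` vanishes, which only happens where `χ` vanishes too.
    have hχp : (χ ξ : ℂ) / p ξ * p ξ = χ ξ := div_mul_cancel_of_imp fun hp0 => by
      rw [hχ0 ξ (not_lt.1 fun h => hpz ξ h.le hp0), Complex.ofReal_zero]
    linear_combination c₀ * c₀ * invFourierInt f (-ξ) * hχp
  rw [hg.diffOp_invFourierInt]
  simp only [← hp, hsymb]
  rw [invFourierInt_const_mul, f.invFourierInt_one_add_mul_invFourierInt_neg hχd,
    finrank_euclideanSpace_fin, hc₀, mul_add, ← mul_assoc, ofReal_two_pi_rpow_neg_mul_pow, one_mul,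
    ← integral_const_mul]
  simp only [mul_assoc]

/-- parametrix for a constant-coefficient operator `P = Σ_{|α|≤d} c_α D^α`
whose symbol `p` is nonvanishing and of tempered inverse growth for `|ξ| ≥ R`.  With a
smooth cutoff `χ` vanishing for `|ξ| ≤ R` and equal to `1` for `|ξ| ≥ R+1`, the operator
`Qf = (2π)^{-n/2} ∫ e^{iξ·x} (χ(ξ)/p(ξ)) f̂(ξ) dξ` satisfies: `Qf` is smooth, `r` is
smooth, and `P(Qf)(x) = f(x) + ∫ r(x-y) f(y) dy`, where
`r(z) = (2π)^{-n} ∫ e^{iξ·z}(χ(ξ)-1) dξ`. -/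
theorem stmt3 (n d : ℕ) (c : (Fin n → ℕ) → ℂ) (R : ℝ) (hR : 0 < R)
    (p : EuclideanSpace ℝ (Fin n) → ℂ)
    (hp : ∀ ξ, p ξ = ∑ α ∈ mIdx n d, c α * ∏ i, ((ξ i : ℝ) : ℂ) ^ α i)
    (hpz : ∀ ξ, R ≤ ‖ξ‖ → p ξ ≠ 0)
    (C : ℝ) (hC : 0 < C) (N : ℕ)
    (hbound : ∀ ξ, R ≤ ‖ξ‖ → ‖(p ξ)⁻¹‖ ≤ C * (1 + ‖ξ‖) ^ N)
    (χ : EuclideanSpace ℝ (Fin n) → ℝ) (hχ : ContDiff ℝ (⊤ : ℕ∞) χ)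
    (hχ0 : ∀ ξ, ‖ξ‖ ≤ R → χ ξ = 0) (hχ1 : ∀ ξ, R + 1 ≤ ‖ξ‖ → χ ξ = 1)
    (f : SchwartzMap (EuclideanSpace ℝ (Fin n)) ℂ)
    (fhat : EuclideanSpace ℝ (Fin n) → ℂ)
    (hfhat : ∀ ξ, fhat ξ = (((2 * Real.pi) ^ (-(n : ℝ) / 2) : ℝ) : ℂ) *
      ∫ y : EuclideanSpace ℝ (Fin n),
        Complex.exp (-(Complex.I * ((∑ i, ξ i * y i : ℝ) : ℂ))) * f y)
    (Qf : EuclideanSpace ℝ (Fin n) → ℂ)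
    (hQf : ∀ x, Qf x = (((2 * Real.pi) ^ (-(n : ℝ) / 2) : ℝ) : ℂ) *
      ∫ ξ : EuclideanSpace ℝ (Fin n),
        Complex.exp (Complex.I * ((∑ i, ξ i * x i : ℝ) : ℂ)) * (((χ ξ : ℂ) / p ξ) * fhat ξ))
    (r : EuclideanSpace ℝ (Fin n) → ℂ)
    (hr : ∀ z, r z = (((2 * Real.pi) ^ (-(n : ℝ)) : ℝ) : ℂ) *
      ∫ ξ : EuclideanSpace ℝ (Fin n),
        Complex.exp (Complex.I * ((∑ i, ξ i * z i : ℝ) : ℂ)) * ((χ ξ : ℂ) - 1)) :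
    ContDiff ℝ (⊤ : ℕ∞) Qf ∧ ContDiff ℝ (⊤ : ℕ∞) r ∧
    ∀ x, diffOp n d (fun α _ => c α) Qf x
      = f x + ∫ y : EuclideanSpace ℝ (Fin n), r (x - y) * f y :=
  stmt3_general n d c R p hp hpz C hC N hbound χ hχ hχ0 hχ1 f fhat hfhat Qf hQf r hr
end

section
/- Let m > 0, λ > 0, c > 2m, and let u : [2m, c) → ℝ be continuous on [2m, c) and differentiable on (2m, c) with u′ bounded on (2m, c). Suppose that on (2m, c) the function r ↦ (r² − 2mr) u′(r) is differentiable with derivative equal to −λ² r³ u(r)/(r − 2m) (this is the equation (r²(1−2m/r)u′)′ + λ² r² (1−2m/r)^{-1} u = 0). Then u(2m) = 0. -/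
/-!
If `a = u(2m) ≠ 0`, the flux `F(r) = a (r² - 2mr) u'(r)` has `F'(r) = -a λ² r³ u(r)/(r - 2m)`,
and `a λ² r³ u(r) → λ² (2m)³ a² > 0` at the horizon, so `F' ≤ -K/(r - 2m)` near `2m` for some
`K > 0`. Then `F + K log(r - 2m)` is decreasing, which forces `F → +∞` as `r → 2m⁺`; but `u'` is
bounded, so `F → 0`.
-/

open Filter Topology Set Real

theorem tendsto_atTop_of_hasDerivAt_le_neg_div_sub {F F' : ℝ → ℝ} {a K : ℝ} (hK : 0 < K)
    (hF : ∀ᶠ r in 𝓝[>] a, HasDerivAt F (F' r) r ∧ F' r ≤ -K / (r - a)) :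
    Tendsto F (𝓝[>] a) atTop := by
  obtain ⟨b, hab : a < b, hsub⟩ := mem_nhdsGT_iff_exists_Ioo_subset.1 hF
  set G : ℝ → ℝ := fun r => F r + K * log (r - a)
  have hG : ∀ r ∈ Ioo a b, HasDerivAt G (F' r + K / (r - a)) r := fun r hr => by
    have hlog := ((hasDerivAt_id' r).sub_const a).log (sub_pos.2 hr.1).ne'
    rw [← mul_one_div]
    exact (hsub hr).1.add (hlog.const_mul K)
  have hanti : AntitoneOn G (Ioo a b) := by
    refine antitoneOn_of_hasDerivWithinAt_nonpos (f' := fun r => F' r + K / (r - a))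
      (convex_Ioo a b) (fun r hr => (hG r hr).continuousAt.continuousWithinAt) ?_ ?_ <;>
      rw [interior_Ioo]
    · exact fun r hr => (hG r hr).hasDerivWithinAt
    · intro r hr
      linarith [(hsub hr).2, neg_div (r - a) K]
  have hmid : a < (a + b) / 2 := by linarith
  have hlog : Tendsto (fun r => log (r - a)) (𝓝[>] a) atBot := by
    refine tendsto_log_nhdsGT_zero.comp (tendsto_nhdsWithin_iff.2 ⟨?_, ?_⟩)
    · exact tendsto_sub_nhds_zero_iff.2 nhdsWithin_le_nhds
    · filter_upwards [self_mem_nhdsWithin] with r hr using sub_pos.2 (mem_Ioi.1 hr)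
  have hbound : Tendsto (fun r => G ((a + b) / 2) - K * log (r - a)) (𝓝[>] a) atTop :=
    tendsto_atTop_add_const_left _ _ (tendsto_neg_atBot_atTop.comp (hlog.const_mul_atBot hK))
  refine tendsto_atTop_mono' _ ?_ hbound
  filter_upwards [Ioo_mem_nhdsGT hmid] with r hr
  have hGr := hanti ⟨hr.1, hr.2.trans (by linarith)⟩ ⟨hmid, by linarith⟩ hr.2.le
  simp only [G] at hGr ⊢
  linarith

theorem tendsto_sq_sub_mul_mul_nhdsGT_zero {g : ℝ → ℝ} {a c M : ℝ} (hc : a < c)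
    (hg : ∀ r ∈ Ioo a c, |g r| ≤ M) :
    Tendsto (fun t => (t ^ 2 - a * t) * g t) (𝓝[>] a) (𝓝 0) := by
  have hpoly : Tendsto (fun t : ℝ => t ^ 2 - a * t) (𝓝[>] a) (𝓝 0) := by
    have : Continuous fun t : ℝ => t ^ 2 - a * t := by fun_prop
    simpa [sq] using (this.tendsto a).mono_left nhdsWithin_le_nhds
  refine hpoly.zero_mul_isBoundedUnder_le (isBoundedUnder_of_eventually_le (a := M) ?_)
  filter_upwards [Ioo_mem_nhdsGT hc] with r hr using hg r hr

theorem stmt12_general (m lam c : ℝ) (hm : 0 < m) (hlam : 0 < lam) (hc : 2 * m < c)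
    (u u' : ℝ → ℝ) (hcont : ContinuousOn u (Set.Ico (2 * m) c))
    (M : ℝ) (hbdd : ∀ r ∈ Set.Ioo (2 * m) c, |u' r| ≤ M)
    (heq : ∀ r ∈ Set.Ioo (2 * m) c,
      HasDerivAt (fun t : ℝ => (t ^ 2 - 2 * m * t) * u' t)
        (-(lam ^ 2) * r ^ 3 * u r / (r - 2 * m)) r) :
    u (2 * m) = 0 := by
  by_contra ha
  set a := u (2 * m)
  set K := lam ^ 2 * (2 * m) ^ 3 * a ^ 2 / 2
  have hK : 0 < K := by positivity
  have hsource : Tendsto (fun r => lam ^ 2 * r ^ 3 * u r * a) (𝓝[>] (2 * m)) (𝓝 (2 * K)) := by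
    have hu : Tendsto u (𝓝[>] (2 * m)) (𝓝 a) :=
      ((hcont _ ⟨le_rfl, hc⟩).mono_of_mem_nhdsWithin (Ico_mem_nhdsGT hc)).tendsto
    have hr : Tendsto (fun r : ℝ => r) (𝓝[>] (2 * m)) (𝓝 (2 * m)) := nhdsWithin_le_nhds
    convert ((hr.pow 3).const_mul (lam ^ 2)).mul hu |>.mul_const a using 2
    ring
  have hflux_top : Tendsto (fun t => a * ((t ^ 2 - 2 * m * t) * u' t)) (𝓝[>] (2 * m)) atTop := by
    refine tendsto_atTop_of_hasDerivAt_le_neg_div_sub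
      (F' := fun r => a * (-(lam ^ 2) * r ^ 3 * u r / (r - 2 * m))) hK ?_
    filter_upwards [Ioo_mem_nhdsGT hc, hsource.eventually (lt_mem_nhds (by linarith : K < 2 * K))]
      with r hr hKr
    refine ⟨(heq r hr).const_mul a, ?_⟩
    rw [← mul_div_assoc, div_le_div_iff_of_pos_right (sub_pos.2 hr.1)]
    linarith
  have hflux_zero := (tendsto_sq_sub_mul_mul_nhdsGT_zero hc hbdd).const_mul a
  exact not_tendsto_atTop_of_tendsto_nhds (by simpa using hflux_zero) hflux_top

/-- A solution of the radial Schwarzschild eigenvalue equation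
`(r²(1-2m/r)u')' + λ² r² (1-2m/r)⁻¹ u = 0` on `(2m, c)` which is continuous on `[2m, c)`
with bounded derivative must vanish at the horizon `r = 2m`. -/
theorem stmt12 (m lam c : ℝ) (hm : 0 < m) (hlam : 0 < lam) (hc : 2 * m < c)
    (u u' : ℝ → ℝ) (hcont : ContinuousOn u (Set.Ico (2 * m) c))
    (hderiv : ∀ r ∈ Set.Ioo (2 * m) c, HasDerivAt u (u' r) r)
    (M : ℝ) (hbdd : ∀ r ∈ Set.Ioo (2 * m) c, |u' r| ≤ M)
    (heq : ∀ r ∈ Set.Ioo (2 * m) c,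
      HasDerivAt (fun t : ℝ => (t ^ 2 - 2 * m * t) * u' t)
        (-(lam ^ 2) * r ^ 3 * u r / (r - 2 * m)) r) :
    u (2 * m) = 0 :=
  stmt12_general m lam c hm hlam hc u u' hcont M hbdd heq
end
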